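/- ILRW = ILR*, where R* is the schema A▷B → ¬(A▷¬C) ▷ (B ∧ □C ∧ □¬A): each of the two logics derives all axioms of the other. In particular, ILR* derives W (A▷B → A ▷ (B ∧ □¬A)) and R, and ILRW derives R*. -/
import Mathlib


/-- Modal formulas of interpretability logic: atoms, ⊥, →, □, ▷. -/
inductive Fm : Type
  | atom : ℕ → Fm
  | bot : Fm
  | imp : Fm → Fm → Fm
  | box : Fm → Fm
  | rhd : Fm → Fm → Fm
deriving DecidableEq

namespace Fm
def neg (A : Fm) : Fm := .imp A .bot
def conj (A B : Fm) : Fm := neg (.imp A (neg B))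
def disj (A B : Fm) : Fm := .imp (neg A) B
def dia (A : Fm) : Fm := neg (.box (neg A))
end Fm

/-- `f` is a boolean propositional evaluation (treats □ and ▷ formulas as atoms). -/
def PropEval (f : Fm → Bool) : Prop :=
  f Fm.bot = false ∧ ∀ A B, f (Fm.imp A B) = (!(f A) || f B)

/-- Propositional tautology. -/
def Taut (A : Fm) : Prop := ∀ f, PropEval f → f A = true

/-- Derivability in the interpretability logic IL extended with extra axioms `X`. -/
inductive Prov (X : Fm → Prop) : Fm → Prop
  | taut {A} : Taut A → Prov X A
  | extra {A} : X A → Prov X A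
  | l1 (A B) : Prov X (.imp (.box (.imp A B)) (.imp (.box A) (.box B)))
  | l2 (A) : Prov X (.imp (.box A) (.box (.box A)))
  | l3 (A) : Prov X (.imp (.box (.imp (.box A) A)) (.box A))
  | j1 (A B) : Prov X (.imp (.box (.imp A B)) (.rhd A B))
  | j2 (A B C) : Prov X (.imp (Fm.conj (.rhd A B) (.rhd B C)) (.rhd A C))
  | j3 (A B C) : Prov X (.imp (Fm.conj (.rhd A C) (.rhd B C)) (.rhd (Fm.disj A B) C))
  | j4 (A B) : Prov X (.imp (.rhd A B) (.imp (Fm.dia A) (Fm.dia B)))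
  | j5 (A) : Prov X (.rhd (Fm.dia A) A)
  | mp {A B} : Prov X (.imp A B) → Prov X A → Prov X B
  | nec {A} : Prov X A → Prov X (.box A)

/-- Derivability in plain IL. -/
def ILProv : Fm → Prop := Prov (fun _ => False)

/-- A Veltman frame (IL-frame). -/
structure VFrame where
  W : Type
  ne : Nonempty W
  R : W → W → Prop
  /-- `S x y z` means `y S_x z`. -/
  S : W → W → W → Prop
  R_trans : ∀ {x y z}, R x y → R y z → R x z
  R_cwf : WellFounded (fun x y => R y x)
  S_R : ∀ {x y z}, S x y z → R x y ∧ R x z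
  S_refl : ∀ {x y}, R x y → S x y y
  R_S : ∀ {x y z}, R x y → R y z → S x y z
  S_trans : ∀ {x u v w}, S x u v → S x v w → S x u w

structure VModel extends VFrame where
  val : W → ℕ → Prop

/-- Satisfaction on Veltman models. -/
def VSat (M : VModel) : M.W → Fm → Prop
  | w, .atom n => M.val w n
  | _, .bot => False
  | w, .imp A B => VSat M w A → VSat M w B
  | w, .box A => ∀ v, M.R w v → VSat M v A
  | w, .rhd A B => ∀ u, M.R w u → VSat M u A → ∃ v, M.S w u v ∧ VSat M v B

/-- Validity on a Veltman frame. -/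
def VFrame.Valid (F : VFrame) (A : Fm) : Prop :=
  ∀ val : F.W → ℕ → Prop, ∀ w : F.W, VSat { toVFrame := F, val := val } w A

/-- A generalized Veltman frame (ILset-frame). -/
structure GFrame where
  W : Type
  ne : Nonempty W
  R : W → W → Prop
  /-- `S w x Y` means `x S_w Y`. -/
  S : W → W → Set W → Prop
  R_trans : ∀ {x y z}, R x y → R y z → R x z
  R_cwf : WellFounded (fun x y => R y x)
  S_ne : ∀ {w x Y}, S w x Y → Y.Nonempty
  S_R : ∀ {w x Y}, S w x Y → R w x ∧ ∀ y ∈ Y, R w y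
  S_refl : ∀ {w x}, R w x → S w x {x}
  S_qtrans : ∀ {w x Y}, S w x Y → ∀ y ∈ Y, ∀ Z, y ∉ Z → S w y Z → S w x Z
  R_S : ∀ {w x y}, R w x → R x y → S w x {y}

structure GModel extends GFrame where
  val : W → ℕ → Prop

/-- Satisfaction on generalized Veltman models. -/
def GSat (M : GModel) : M.W → Fm → Prop
  | w, .atom n => M.val w n
  | _, .bot => False
  | w, .imp A B => GSat M w A → GSat M w B
  | w, .box A => ∀ v, M.R w v → GSat M v A
  | w, .rhd A B => ∀ x, M.R w x → GSat M x A →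
      ∃ Y, M.S w x Y ∧ ∀ y ∈ Y, GSat M y B

/-- Validity on a generalized Veltman frame. -/
def GFrame.Valid (F : GFrame) (A : Fm) : Prop :=
  ∀ val : F.W → ℕ → Prop, ∀ w : F.W, GSat { toGFrame := F, val := val } w A

/-- Instances of the principle M0. -/
def m0fm (A B C : Fm) : Fm :=
  .imp (.rhd A B) (.rhd (Fm.conj (Fm.dia A) (.box C)) (Fm.conj B (.box C)))

/-- Instances of the principle P0. -/
def p0fm (A B : Fm) : Fm := .imp (.rhd A (Fm.dia B)) (.box (.rhd A B))

/-- Instances of the principle R. -/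
def rfm (A B C : Fm) : Fm :=
  .imp (.rhd A B) (.rhd (Fm.neg (.rhd A (Fm.neg C))) (Fm.conj B (.box C)))

/-- Instances of the principle W. -/
def wfm (A B : Fm) : Fm :=
  .imp (.rhd A B) (.rhd A (Fm.conj B (.box (Fm.neg A))))

/-- Instances of the principle W*. -/
def wstarfm (A B C : Fm) : Fm :=
  .imp (.rhd A B)
    (.rhd (Fm.conj B (.box C)) (Fm.conj (Fm.conj B (.box C)) (.box (Fm.neg A))))

/-- Instances of the principle R*. -/
def rstarfm (A B C : Fm) : Fm :=
  .imp (.rhd A B)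
    (.rhd (Fm.neg (.rhd A (Fm.neg C))) (Fm.conj (Fm.conj B (.box C)) (.box (Fm.neg A))))

/-- The frame condition for M0 on generalized Veltman frames. -/
def GFrame.M0Cond (F : GFrame) : Prop :=
  ∀ w x y Y, F.R w x → F.R x y → F.S w y Y →
    ∃ Y', Y' ⊆ Y ∧ F.S w x Y' ∧ ∀ y' ∈ Y', ∀ z, F.R y' z → F.R x z

/-- The frame condition for P0 on generalized Veltman frames. -/
def GFrame.P0Cond (F : GFrame) : Prop :=
  ∀ w x y Y Z, F.R w x → F.R x y → F.S w y Y →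
    (∀ y' ∈ Y, ∃ z ∈ Z, F.R y' z) → ∃ Z', Z' ⊆ Z ∧ F.S x y Z'

/-- `Γ` is a choice set for `(w,x)`. -/
def GFrame.ChoiceSet (F : GFrame) (w x : F.W) (Γ : Set F.W) : Prop :=
  ∀ X, F.S w x X → (X ∩ Γ).Nonempty

/-- The frame condition for R on generalized Veltman frames. -/
def GFrame.RCond (F : GFrame) : Prop :=
  ∀ w x y Y, F.R w x → F.R x y → F.S w y Y →
    ∀ Γ, F.ChoiceSet x y Γ →
      ∃ Y', Y' ⊆ Y ∧ F.S w x Y' ∧ ∀ y' ∈ Y', ∀ z, F.R y' z → z ∈ Γ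

/-- The axiom set consisting of all instances of R and W. -/
def RWAx : Fm → Prop := fun F => (∃ A B C, F = rfm A B C) ∨ (∃ A B, F = wfm A B)

/-- The axiom set consisting of all instances of R*. -/
def RstarAx : Fm → Prop := fun F => ∃ A B C, F = rstarfm A B C

namespace ILAux

variable {X : Fm → Prop}

lemma mkTaut {A : Fm} (h : ∀ f : Fm → Bool, f Fm.bot = false →
    (∀ P Q, f (Fm.imp P Q) = (!(f P) || f Q)) → f A = true) : Taut A :=
  fun f hf => h f hf.1 hf.2

lemma evalNeg {f : Fm → Bool} (hb : f Fm.bot = false)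
    (hi : ∀ P Q, f (Fm.imp P Q) = (!(f P) || f Q)) :
    ∀ P, f (Fm.neg P) = !(f P) := by
  intro P; simp [Fm.neg, hi, hb]

lemma evalConj {f : Fm → Bool} (hb : f Fm.bot = false)
    (hi : ∀ P Q, f (Fm.imp P Q) = (!(f P) || f Q)) :
    ∀ P Q, f (Fm.conj P Q) = (f P && f Q) := by
  intro P Q; simp [Fm.conj, Fm.neg, hi, hb]

lemma evalDisj {f : Fm → Bool} (hb : f Fm.bot = false)
    (hi : ∀ P Q, f (Fm.imp P Q) = (!(f P) || f Q)) :
    ∀ P Q, f (Fm.disj P Q) = (f P || f Q) := by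
  intro P Q; simp [Fm.disj, Fm.neg, hi, hb]

lemma evalDia {f : Fm → Bool} (hb : f Fm.bot = false)
    (hi : ∀ P Q, f (Fm.imp P Q) = (!(f P) || f Q)) :
    ∀ P, f (Fm.dia P) = !(f (Fm.box (Fm.neg P))) := by
  intro P; simp [Fm.dia, Fm.neg, hi, hb]

lemma impTrans {A B C : Fm} (h1 : Prov X (.imp A B)) (h2 : Prov X (.imp B C)) :
    Prov X (.imp A C) := by
  have t : Prov X (.imp (.imp B C) (.imp (.imp A B) (.imp A C))) :=
    .taut (mkTaut fun f hb hi => by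
      simp only [hi]
      cases f A <;> cases f B <;> cases f C <;> rfl)
  exact (t.mp h2).mp h1

lemma curry {P Q R : Fm} (h : Prov X (.imp (Fm.conj P Q) R)) :
    Prov X (.imp P (.imp Q R)) := by
  have t : Prov X (.imp (.imp (Fm.conj P Q) R) (.imp P (.imp Q R))) :=
    .taut (mkTaut fun f hb hi => by
      simp only [Fm.conj, Fm.neg, hi, hb]
      cases f P <;> cases f Q <;> cases f R <;> rfl)
  exact t.mp h

lemma curry' {P Q R : Fm} (h : Prov X (.imp (Fm.conj P Q) R)) :
    Prov X (.imp Q (.imp P R)) := by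
  have t : Prov X (.imp (.imp (Fm.conj P Q) R) (.imp Q (.imp P R))) :=
    .taut (mkTaut fun f hb hi => by
      simp only [Fm.conj, Fm.neg, hi, hb]
      cases f P <;> cases f Q <;> cases f R <;> rfl)
  exact t.mp h

lemma rhdOfImp {A B : Fm} (h : Prov X (.imp A B)) : Prov X (.rhd A B) :=
  (Prov.j1 A B).mp h.nec

lemma rhdMono {E E' : Fm} (D : Fm) (h : Prov X (.imp E E')) :
    Prov X (.imp (.rhd D E) (.rhd D E')) :=
  (curry' (Prov.j2 D E E')).mp (rhdOfImp h)

lemma rhdPre {A B : Fm} (C : Fm) (h : Prov X (.rhd A B)) :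
    Prov X (.imp (.rhd B C) (.rhd A C)) :=
  (curry (Prov.j2 A B C)).mp h

lemma hypRhdComp {P x y z : Fm} (h1 : Prov X (.imp P (.rhd x y)))
    (h2 : Prov X (.imp P (.rhd y z))) : Prov X (.imp P (.rhd x z)) := by
  have t : Prov X (.imp (.imp (Fm.conj (.rhd x y) (.rhd y z)) (.rhd x z))
      (.imp (.imp P (.rhd x y)) (.imp (.imp P (.rhd y z)) (.imp P (.rhd x z))))) :=
    .taut (mkTaut fun f hb hi => by
      simp only [Fm.conj, Fm.neg, hi, hb]
      cases f P <;> cases f (Fm.rhd x y) <;> cases f (Fm.rhd y z) <;>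
        cases f (Fm.rhd x z) <;> rfl)
  exact ((t.mp (Prov.j2 x y z)).mp h1).mp h2

/-- The formula ⊤. -/
def top : Fm := Fm.neg Fm.bot

/-- ILR* proves W. -/
lemma w_in_rstar (A B : Fm) : Prov RstarAx (wfm A B) := by
  -- abbreviations
  set nA : Fm := Fm.neg A with hnA
  set G : Fm := Fm.conj B (.box nA) with hG
  set D : Fm := Fm.neg (.rhd A (Fm.neg top)) with hD
  set E : Fm := Fm.conj (Fm.conj B (.box top)) (.box nA) with hE
  have hRs : Prov RstarAx (.imp (.rhd A B) (.rhd D E)) :=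
    Prov.extra ⟨A, B, top, rfl⟩
  have tEG : Prov RstarAx (.imp E G) :=
    .taut (mkTaut fun f hb hi => by
      simp only [hE, hG, evalConj hb hi, evalNeg hb hi, hi]
      cases f B <;> cases f (Fm.box top) <;> cases f (Fm.box nA) <;> rfl)
  have h1 : Prov RstarAx (.imp (.rhd A B) (.rhd D G)) :=
    impTrans hRs (rhdMono D tEG)
  -- ◇A ▷ D
  have hK : Prov RstarAx (.box (Fm.neg (Fm.neg top))) :=
    Prov.nec (.taut (mkTaut fun f hb hi => by
      simp only [top, evalNeg hb hi, hb]; rfl))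
  have t7 : Prov RstarAx
      (.imp (.imp (.rhd A (Fm.neg top)) (.imp (Fm.dia A) (Fm.dia (Fm.neg top))))
        (.imp (.box (Fm.neg (Fm.neg top))) (.imp (Fm.dia A) D))) :=
    .taut (mkTaut fun f hb hi => by
      simp only [hD, evalDia hb hi, evalNeg hb hi, hi]
      cases f (Fm.rhd A (Fm.neg top)) <;>
        cases f (Fm.box (Fm.neg (Fm.neg top))) <;>
        cases f (Fm.box (Fm.neg A)) <;> cases f (Fm.dia A) <;> rfl)
  have hDA : Prov RstarAx (.imp (Fm.dia A) D) :=
    (t7.mp (Prov.j4 A (Fm.neg top))).mp hK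
  have h2 : Prov RstarAx (.rhd (Fm.dia A) D) := rhdOfImp hDA
  have h3 : Prov RstarAx (.imp (.rhd A B) (.rhd (Fm.dia A) G)) :=
    impTrans h1 (rhdPre G h2)
  have t6 : Prov RstarAx (.imp B (Fm.disj G (Fm.dia A))) :=
    .taut (mkTaut fun f hb hi => by
      simp only [hG, evalDisj hb hi, evalDia hb hi, evalConj hb hi, evalNeg hb hi, hi]
      cases f B <;> cases f (Fm.box nA) <;> rfl)
  have h5 : Prov RstarAx (.imp (.rhd A B) (.rhd A (Fm.disj G (Fm.dia A)))) :=
    rhdMono A t6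
  have h6 : Prov RstarAx (.rhd G G) :=
    rhdOfImp (.taut (mkTaut fun f hb hi => by
      simp only [hi]; cases f G <;> rfl))
  have h7a : Prov RstarAx (.imp (.rhd (Fm.dia A) G) (.rhd (Fm.disj G (Fm.dia A)) G)) :=
    (curry (Prov.j3 G (Fm.dia A) G)).mp h6
  have h7 : Prov RstarAx (.imp (.rhd A B) (.rhd (Fm.disj G (Fm.dia A)) G)) :=
    impTrans h3 h7a
  exact hypRhdComp h5 h7

/-- ILR* proves R. -/
lemma r_in_rstar (A B C : Fm) : Prov RstarAx (rfm A B C) := by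
  have hRs : Prov RstarAx (rstarfm A B C) := Prov.extra ⟨A, B, C, rfl⟩
  have t5 : Prov RstarAx
      (.imp (Fm.conj (Fm.conj B (.box C)) (.box (Fm.neg A))) (Fm.conj B (.box C))) :=
    .taut (mkTaut fun f hb hi => by
      simp only [evalConj hb hi, hi]
      cases f B <;> cases f (Fm.box C) <;> cases f (Fm.box (Fm.neg A)) <;> rfl)
  exact impTrans hRs (rhdMono _ t5)

/-- ILRW proves R*. -/
lemma rstar_in_rw (A B C : Fm) : Prov RWAx (rstarfm A B C) := by
  set G : Fm := Fm.conj B (.box (Fm.neg A)) with hG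
  have hW : Prov RWAx (.imp (.rhd A B) (.rhd A G)) := Prov.extra (Or.inr ⟨A, B, rfl⟩)
  have hR : Prov RWAx (.imp (.rhd A G)
      (.rhd (Fm.neg (.rhd A (Fm.neg C))) (Fm.conj G (.box C)))) :=
    Prov.extra (Or.inl ⟨A, G, C, rfl⟩)
  have t9 : Prov RWAx (.imp (Fm.conj G (.box C))
      (Fm.conj (Fm.conj B (.box C)) (.box (Fm.neg A)))) :=
    .taut (mkTaut fun f hb hi => by
      simp only [hG, evalConj hb hi, hi]
      cases f B <;> cases f (Fm.box C) <;> cases f (Fm.box (Fm.neg A)) <;> rfl)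
  exact impTrans (impTrans hW hR) (rhdMono _ t9)

lemma rstar_of_rw {A : Fm} (h : Prov RWAx A) : Prov RstarAx A := by
  induction h with
  | taut h => exact .taut h
  | extra h =>
    rcases h with ⟨a, b, c, rfl⟩ | ⟨a, b, rfl⟩
    · exact r_in_rstar a b c
    · exact w_in_rstar a b
  | l1 A B => exact .l1 A B
  | l2 A => exact .l2 A
  | l3 A => exact .l3 A
  | j1 A B => exact .j1 A B
  | j2 A B C => exact .j2 A B C
  | j3 A B C => exact .j3 A B C
  | j4 A B => exact .j4 A B
  | j5 A => exact .j5 A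
  | mp _ _ ih1 ih2 => exact ih1.mp ih2
  | nec _ ih => exact ih.nec

lemma rw_of_rstar {A : Fm} (h : Prov RstarAx A) : Prov RWAx A := by
  induction h with
  | taut h => exact .taut h
  | extra h => obtain ⟨a, b, c, rfl⟩ := h; exact rstar_in_rw a b c
  | l1 A B => exact .l1 A B
  | l2 A => exact .l2 A
  | l3 A => exact .l3 A
  | j1 A B => exact .j1 A B
  | j2 A B C => exact .j2 A B C
  | j3 A B C => exact .j3 A B C
  | j4 A B => exact .j4 A B
  | j5 A => exact .j5 A
  | mp _ _ ih1 ih2 => exact ih1.mp ih2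
  | nec _ ih => exact ih.nec

end ILAux

/-- ILRW = ILR*. -/
theorem ilrw_eq_ilrstar : ∀ A : Fm, Prov RWAx A ↔ Prov RstarAx A :=
  fun _ => ⟨ILAux.rstar_of_rw, ILAux.rw_of_rstar⟩
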